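/- Let ℓ, m, n ∈ ℕ. Let Q₀ : [0,1]² → Matrix(m,ℓ,ℝ), R₀ : [0,1]² → Matrix(ℓ,n,ℝ), Q₁ : [0,1]⁴ → Matrix(m,ℓ,ℝ), and R₁ : [0,1]⁴ → Matrix(ℓ,n,ℝ) be continuous. For a continuous v : [0,1]² → ℝⁿ define (ℛv)(x,y) := R₀(x,y)v(x,y) + ∫₀¹∫₀¹ R₁(x,y,θ,η)v(θ,η)dη dθ, and for a continuous u : [0,1]² → ℝˡ define (𝒬u)(x,y) := Q₀(x,y)u(x,y) + ∫₀¹∫₀¹ Q₁(x,y,θ,η)u(θ,η)dη dθ. Then for every continuous v : [0,1]² → ℝⁿ and all (x,y) ∈ [0,1]²: (𝒬(ℛv))(x,y) = Q₀(x,y)R₀(x,y)v(x,y) + ∫₀¹∫₀¹ P₁(x,y,θ,η)v(θ,η)dη dθ, where P₁(x,y,θ,η) := Q₀(x,y)R₁(x,y,θ,η) + Q₁(x,y,θ,η)R₀(θ,η) + ∫₀¹∫₀¹ Q₁(x,y,ν,μ)R₁(ν,μ,θ,η)dμ dν. -/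
import Mathlib


open MeasureTheory Matrix

/-- An operator of multiplier-plus-full-integral form: multiplier `R₀` plus a
full double-integral term with kernel `R₁`. -/
noncomputable def sepPIop {l m : ℕ}
    (R₀ : ℝ → ℝ → Matrix (Fin m) (Fin l) ℝ)
    (R₁ : ℝ → ℝ → ℝ → ℝ → Matrix (Fin m) (Fin l) ℝ)
    (v : ℝ → ℝ → Fin l → ℝ) (x y : ℝ) : Fin m → ℝ :=
  (R₀ x y).mulVec (v x y)
    + ∫ θ in (0:ℝ)..1, ∫ η in (0:ℝ)..1, (R₁ x y θ η).mulVec (v θ η)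

section auxPI

lemma contOn_entry {α : Type*} [TopologicalSpace α] {a b : ℕ}
    {M : α → Matrix (Fin a) (Fin b) ℝ} {s : Set α} (hM : ContinuousOn M s)
    (i : Fin a) (j : Fin b) : ContinuousOn (fun x => M x i j) s := by
  have := ((continuous_apply j).comp (continuous_apply i)).comp_continuousOn hM
  exact this

lemma contOn_matMul {α : Type*} [TopologicalSpace α] {a b c : ℕ}
    {M : α → Matrix (Fin a) (Fin b) ℝ} {N : α → Matrix (Fin b) (Fin c) ℝ} {s : Set α}
    (hM : ContinuousOn M s) (hN : ContinuousOn N s) :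
    ContinuousOn (fun x => M x * N x) s := by
  apply continuousOn_pi.2; intro i
  apply continuousOn_pi.2; intro j
  have h : (fun x => (M x * N x) i j) = fun x => ∑ k, M x i k * N x k j := by
    funext x; simp [Matrix.mul_apply]
  rw [h]
  exact continuousOn_finset_sum _ fun k _ => (contOn_entry hM i k).mul (contOn_entry hN k j)

lemma contOn_mulVec {α : Type*} [TopologicalSpace α] {a b : ℕ}
    {M : α → Matrix (Fin a) (Fin b) ℝ} {w : α → Fin b → ℝ} {s : Set α}
    (hM : ContinuousOn M s) (hw : ContinuousOn w s) :
    ContinuousOn (fun x => (M x).mulVec (w x)) s := by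
  apply continuousOn_pi.2; intro i
  have h : (fun x => (M x).mulVec (w x) i) = fun x => ∑ j, M x i j * w x j := by
    funext x; simp [Matrix.mulVec, dotProduct]
  rw [h]
  exact continuousOn_finset_sum _ fun j _ =>
    (contOn_entry hM i j).mul ((continuous_apply j).comp_continuousOn hw)

lemma pi_integral_apply {α : Type*} [MeasurableSpace α] {μ : Measure α} {k : ℕ}
    {f : α → Fin k → ℝ} (hf : Integrable f μ) (i : Fin k) :
    (∫ x, f x ∂μ) i = ∫ x, f x i ∂μ :=
  ((ContinuousLinearMap.proj (R := ℝ) (φ := fun _ : Fin k => ℝ) i).integral_comp_comm hf).symm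

lemma mulVec_integral {α : Type*} [MeasurableSpace α] {μ : Measure α} {a b : ℕ}
    (M : Matrix (Fin a) (Fin b) ℝ) {f : α → Fin b → ℝ} (hf : Integrable f μ) :
    M.mulVec (∫ x, f x ∂μ) = ∫ x, M.mulVec (f x) ∂μ := by
  have h := (LinearMap.toContinuousLinearMap M.mulVecLin).integral_comp_comm hf
  simpa [LinearMap.coe_toContinuousLinearMap', Matrix.mulVecLin_apply] using h.symm

lemma integral_mulVec_const {α : Type*} [MeasurableSpace α] {μ : Measure α} {a b : ℕ}
    {M : α → Matrix (Fin a) (Fin b) ℝ} (w : Fin b → ℝ)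
    (hM : ∀ i j, Integrable (fun x => M x i j) μ)
    (hMw : Integrable (fun x => (M x).mulVec w) μ) :
    ∫ x, (M x).mulVec w ∂μ = (Matrix.of fun i j => ∫ x, M x i j ∂μ).mulVec w := by
  funext i
  rw [pi_integral_apply hMw i]
  have h1 : (fun x => (M x).mulVec w i) = fun x => ∑ j, M x i j * w j := by
    funext x; simp [Matrix.mulVec, dotProduct]
  rw [h1, integral_finset_sum _ fun j _ => (hM i j).mul_const (w j)]
  have h2 : (Matrix.of fun i j => ∫ x, M x i j ∂μ).mulVec w i
      = ∑ j, (∫ x, M x i j ∂μ) * w j := by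
    simp [Matrix.mulVec, dotProduct]
  rw [h2]
  exact Finset.sum_congr rfl fun j _ => integral_mul_const (w j) _

lemma double_int_eq {E : Type*} [NormedAddCommGroup E] [NormedSpace ℝ E] [CompleteSpace E]
    (F : ℝ → ℝ → E)
    (hF : IntegrableOn (fun p : ℝ × ℝ => F p.1 p.2)
      (Set.Ioc 0 1 ×ˢ Set.Ioc 0 1) volume) :
    (∫ θ in (0:ℝ)..1, ∫ η in (0:ℝ)..1, F θ η)
      = ∫ p in Set.Ioc (0:ℝ) 1 ×ˢ Set.Ioc (0:ℝ) 1, F p.1 p.2 := by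
  rw [intervalIntegral.integral_of_le zero_le_one]
  have h : ∀ θ : ℝ, (∫ η in (0:ℝ)..1, F θ η) = ∫ η in Set.Ioc (0:ℝ) 1, F θ η :=
    fun θ => intervalIntegral.integral_of_le zero_le_one
  simp_rw [h]
  rw [MeasureTheory.Measure.volume_eq_prod] at hF ⊢
  exact (setIntegral_prod _ hF).symm

lemma integrableOn_A {E : Type*} [NormedAddCommGroup E]
    {F : ℝ × ℝ → E} (hF : ContinuousOn F (Set.Icc 0 1 ×ˢ Set.Icc 0 1)) :
    IntegrableOn F (Set.Ioc 0 1 ×ˢ Set.Ioc 0 1) volume :=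
  (hF.integrableOn_compact (isCompact_Icc.prod isCompact_Icc)).mono_set
    (Set.prod_mono Set.Ioc_subset_Icc_self Set.Ioc_subset_Icc_self)

lemma integrableOn_AA {E : Type*} [NormedAddCommGroup E]
    {F : (ℝ × ℝ) × (ℝ × ℝ) → E}
    (hF : ContinuousOn F ((Set.Icc 0 1 ×ˢ Set.Icc 0 1) ×ˢ (Set.Icc 0 1 ×ˢ Set.Icc 0 1))) :
    IntegrableOn F ((Set.Ioc 0 1 ×ˢ Set.Ioc 0 1) ×ˢ (Set.Ioc 0 1 ×ˢ Set.Ioc 0 1)) volume :=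
  (hF.integrableOn_compact
      ((isCompact_Icc.prod isCompact_Icc).prod (isCompact_Icc.prod isCompact_Icc))).mono_set
    (Set.prod_mono (Set.prod_mono Set.Ioc_subset_Icc_self Set.Ioc_subset_Icc_self)
      (Set.prod_mono Set.Ioc_subset_Icc_self Set.Ioc_subset_Icc_self))

end auxPI

/-- Composition rule for operators of multiplier-plus-full-integral form: the
composition `𝒬 ∘ ℛ` is again of the same form, with multiplier `Q₀R₀` and
integral kernel
`P₁(x,y,θ,η) = Q₀(x,y)R₁(x,y,θ,η) + Q₁(x,y,θ,η)R₀(θ,η) + ∬ Q₁(x,y,ν,μ)R₁(ν,μ,θ,η)`. -/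
theorem sepPIop_comp {l m n : ℕ}
    (Q₀ : ℝ → ℝ → Matrix (Fin m) (Fin l) ℝ)
    (R₀ : ℝ → ℝ → Matrix (Fin l) (Fin n) ℝ)
    (Q₁ : ℝ → ℝ → ℝ → ℝ → Matrix (Fin m) (Fin l) ℝ)
    (R₁ : ℝ → ℝ → ℝ → ℝ → Matrix (Fin l) (Fin n) ℝ)
    (hQ₀ : ContinuousOn (fun q : ℝ × ℝ => Q₀ q.1 q.2) (Set.Icc 0 1 ×ˢ Set.Icc 0 1))
    (hR₀ : ContinuousOn (fun q : ℝ × ℝ => R₀ q.1 q.2) (Set.Icc 0 1 ×ˢ Set.Icc 0 1))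
    (hQ₁ : ContinuousOn (fun q : ℝ × ℝ × ℝ × ℝ => Q₁ q.1 q.2.1 q.2.2.1 q.2.2.2)
      (Set.Icc 0 1 ×ˢ Set.Icc 0 1 ×ˢ Set.Icc 0 1 ×ˢ Set.Icc 0 1))
    (hR₁ : ContinuousOn (fun q : ℝ × ℝ × ℝ × ℝ => R₁ q.1 q.2.1 q.2.2.1 q.2.2.2)
      (Set.Icc 0 1 ×ˢ Set.Icc 0 1 ×ˢ Set.Icc 0 1 ×ˢ Set.Icc 0 1))
    (P₁ : ℝ → ℝ → ℝ → ℝ → Matrix (Fin m) (Fin n) ℝ)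
    (hP₁ : ∀ x y θ η : ℝ,
      P₁ x y θ η = Q₀ x y * R₁ x y θ η + Q₁ x y θ η * R₀ θ η
        + Matrix.of fun i j =>
            ∫ ν in (0:ℝ)..1, ∫ μ in (0:ℝ)..1, (Q₁ x y ν μ * R₁ ν μ θ η) i j)
    (v : ℝ → ℝ → Fin n → ℝ)
    (hv : ContinuousOn (fun q : ℝ × ℝ => v q.1 q.2) (Set.Icc 0 1 ×ˢ Set.Icc 0 1))
    (x y : ℝ) (hx : x ∈ Set.Icc (0:ℝ) 1) (hy : y ∈ Set.Icc (0:ℝ) 1) :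
    sepPIop Q₀ Q₁ (sepPIop R₀ R₁ v) x y
      = (Q₀ x y * R₀ x y).mulVec (v x y)
        + ∫ θ in (0:ℝ)..1, ∫ η in (0:ℝ)..1, (P₁ x y θ η).mulVec (v θ η) := by
  classical
  have hAmeas : MeasurableSet (Set.Ioc (0:ℝ) 1 ×ˢ Set.Ioc (0:ℝ) 1) :=
    measurableSet_Ioc.prod measurableSet_Ioc
  have Asub : (Set.Ioc (0:ℝ) 1 ×ˢ Set.Ioc (0:ℝ) 1)
      ⊆ Set.Icc (0:ℝ) 1 ×ˢ Set.Icc (0:ℝ) 1 :=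
    Set.prod_mono Set.Ioc_subset_Icc_self Set.Ioc_subset_Icc_self
  -- continuity facts
  have cQ1 : ContinuousOn (fun p : ℝ × ℝ => Q₁ x y p.1 p.2)
      (Set.Icc 0 1 ×ˢ Set.Icc 0 1) := by
    have hmap : Continuous (fun p : ℝ × ℝ => ((x, y, p) : ℝ × ℝ × ℝ × ℝ)) := by fun_prop
    exact hQ₁.comp hmap.continuousOn (fun p hp => ⟨hx, hy, hp.1, hp.2⟩)
  have cR1xy : ContinuousOn (fun p : ℝ × ℝ => R₁ x y p.1 p.2)
      (Set.Icc 0 1 ×ˢ Set.Icc 0 1) := by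
    have hmap : Continuous (fun p : ℝ × ℝ => ((x, y, p) : ℝ × ℝ × ℝ × ℝ)) := by fun_prop
    exact hR₁.comp hmap.continuousOn (fun p hp => ⟨hx, hy, hp.1, hp.2⟩)
  have cR1p : ∀ θ η : ℝ, θ ∈ Set.Icc (0:ℝ) 1 → η ∈ Set.Icc (0:ℝ) 1 →
      ContinuousOn (fun q : ℝ × ℝ => R₁ θ η q.1 q.2) (Set.Icc 0 1 ×ˢ Set.Icc 0 1) := by
    intro θ η hθ hη
    have hmap : Continuous (fun q : ℝ × ℝ => ((θ, η, q) : ℝ × ℝ × ℝ × ℝ)) := by fun_prop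
    exact hR₁.comp hmap.continuousOn (fun q hq => ⟨hθ, hη, hq.1, hq.2⟩)
  have cR1q : ∀ θ η : ℝ, θ ∈ Set.Icc (0:ℝ) 1 → η ∈ Set.Icc (0:ℝ) 1 →
      ContinuousOn (fun p : ℝ × ℝ => R₁ p.1 p.2 θ η) (Set.Icc 0 1 ×ˢ Set.Icc 0 1) := by
    intro θ η hθ hη
    have hmap : Continuous (fun p : ℝ × ℝ => ((p.1, p.2, θ, η) : ℝ × ℝ × ℝ × ℝ)) := by
      fun_prop
    exact hR₁.comp hmap.continuousOn (fun p hp => ⟨hp.1, hp.2, hθ, hη⟩)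
  have cH : ContinuousOn (fun z : (ℝ × ℝ) × (ℝ × ℝ) =>
      (Q₁ x y z.1.1 z.1.2 * R₁ z.1.1 z.1.2 z.2.1 z.2.2).mulVec (v z.2.1 z.2.2))
      ((Set.Icc 0 1 ×ˢ Set.Icc 0 1) ×ˢ (Set.Icc 0 1 ×ˢ Set.Icc 0 1)) := by
    apply contOn_mulVec
    · apply contOn_matMul
      · exact cQ1.comp continuous_fst.continuousOn (fun z hz => hz.1)
      · have hmap : Continuous (fun z : (ℝ × ℝ) × (ℝ × ℝ) =>
            ((z.1.1, z.1.2, z.2.1, z.2.2) : ℝ × ℝ × ℝ × ℝ)) := by fun_prop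
        exact hR₁.comp hmap.continuousOn (fun z hz => ⟨hz.1.1, hz.1.2, hz.2.1, hz.2.2⟩)
    · exact hv.comp continuous_snd.continuousOn (fun z hz => hz.2)
  -- integrability facts
  have iH : Integrable (fun z : (ℝ × ℝ) × (ℝ × ℝ) =>
      (Q₁ x y z.1.1 z.1.2 * R₁ z.1.1 z.1.2 z.2.1 z.2.2).mulVec (v z.2.1 z.2.2))
      ((volume.restrict (Set.Ioc (0:ℝ) 1 ×ˢ Set.Ioc (0:ℝ) 1)).prod
        (volume.restrict (Set.Ioc (0:ℝ) 1 ×ˢ Set.Ioc (0:ℝ) 1))) := by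
    rw [Measure.prod_restrict, ← Measure.volume_eq_prod]
    exact integrableOn_AA cH
  have ik1 : IntegrableOn (fun q : ℝ × ℝ => (R₁ x y q.1 q.2).mulVec (v q.1 q.2))
      (Set.Ioc (0:ℝ) 1 ×ˢ Set.Ioc (0:ℝ) 1) volume :=
    integrableOn_A (contOn_mulVec cR1xy hv)
  have ik0 : IntegrableOn (fun q : ℝ × ℝ => (Q₀ x y * R₁ x y q.1 q.2).mulVec (v q.1 q.2))
      (Set.Ioc (0:ℝ) 1 ×ˢ Set.Ioc (0:ℝ) 1) volume :=
    integrableOn_A (contOn_mulVec (contOn_matMul continuousOn_const cR1xy) hv)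
  have ik2 : IntegrableOn
      (fun p : ℝ × ℝ => (Q₁ x y p.1 p.2 * R₀ p.1 p.2).mulVec (v p.1 p.2))
      (Set.Ioc (0:ℝ) 1 ×ˢ Set.Ioc (0:ℝ) 1) volume :=
    integrableOn_A (contOn_mulVec (contOn_matMul cQ1 hR₀) hv)
  have iW : Integrable (fun p : ℝ × ℝ =>
      ∫ q in Set.Ioc (0:ℝ) 1 ×ˢ Set.Ioc (0:ℝ) 1,
        (Q₁ x y p.1 p.2 * R₁ p.1 p.2 q.1 q.2).mulVec (v q.1 q.2))
      (volume.restrict (Set.Ioc (0:ℝ) 1 ×ˢ Set.Ioc (0:ℝ) 1)) := by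
    have := iH.integral_prod_left
    exact this
  have iW2 : Integrable (fun q : ℝ × ℝ =>
      ∫ p in Set.Ioc (0:ℝ) 1 ×ˢ Set.Ioc (0:ℝ) 1,
        (Q₁ x y p.1 p.2 * R₁ p.1 p.2 q.1 q.2).mulVec (v q.1 q.2))
      (volume.restrict (Set.Ioc (0:ℝ) 1 ×ˢ Set.Ioc (0:ℝ) 1)) := by
    have := iH.integral_prod_right
    exact this
  -- the inner operator on the unit square
  have hgK : ∀ θ η : ℝ, θ ∈ Set.Icc (0:ℝ) 1 → η ∈ Set.Icc (0:ℝ) 1 →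
      sepPIop R₀ R₁ v θ η
        = (R₀ θ η).mulVec (v θ η)
          + ∫ q in Set.Ioc (0:ℝ) 1 ×ˢ Set.Ioc (0:ℝ) 1,
              (R₁ θ η q.1 q.2).mulVec (v q.1 q.2) := by
    intro θ η hθ hη
    unfold sepPIop
    congr 1
    exact double_int_eq (fun a b => (R₁ θ η a b).mulVec (v a b))
      (integrableOn_A (contOn_mulVec (cR1p θ η hθ hη) hv))
  have step2 : ∀ θ η : ℝ, θ ∈ Set.Icc (0:ℝ) 1 → η ∈ Set.Icc (0:ℝ) 1 →
      (Q₁ x y θ η).mulVec (sepPIop R₀ R₁ v θ η)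
        = (Q₁ x y θ η * R₀ θ η).mulVec (v θ η)
          + ∫ q in Set.Ioc (0:ℝ) 1 ×ˢ Set.Ioc (0:ℝ) 1,
              (Q₁ x y θ η * R₁ θ η q.1 q.2).mulVec (v q.1 q.2) := by
    intro θ η hθ hη
    rw [hgK θ η hθ hη, Matrix.mulVec_add, Matrix.mulVec_mulVec,
      mulVec_integral _ (integrableOn_A (contOn_mulVec (cR1p θ η hθ hη) hv))]
    simp only [Matrix.mulVec_mulVec]
  have hinner : ∀ θ η : ℝ, θ ∈ Set.Icc (0:ℝ) 1 → η ∈ Set.Icc (0:ℝ) 1 →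
      (∫ p in Set.Ioc (0:ℝ) 1 ×ˢ Set.Ioc (0:ℝ) 1,
          (Q₁ x y p.1 p.2 * R₁ p.1 p.2 θ η).mulVec (v θ η))
        = (Matrix.of fun i j => ∫ p in Set.Ioc (0:ℝ) 1 ×ˢ Set.Ioc (0:ℝ) 1,
            (Q₁ x y p.1 p.2 * R₁ p.1 p.2 θ η) i j).mulVec (v θ η) := by
    intro θ η hθ hη
    exact integral_mulVec_const (v θ η)
      (fun i j => integrableOn_A (contOn_entry (contOn_matMul cQ1 (cR1q θ η hθ hη)) i j))
      (integrableOn_A (contOn_mulVec (contOn_matMul cQ1 (cR1q θ η hθ hη)) continuousOn_const))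
  have hP : ∀ θ η : ℝ, θ ∈ Set.Icc (0:ℝ) 1 → η ∈ Set.Icc (0:ℝ) 1 →
      P₁ x y θ η
        = Q₀ x y * R₁ x y θ η + Q₁ x y θ η * R₀ θ η
          + Matrix.of (fun i j => ∫ p in Set.Ioc (0:ℝ) 1 ×ˢ Set.Ioc (0:ℝ) 1,
              (Q₁ x y p.1 p.2 * R₁ p.1 p.2 θ η) i j) := by
    intro θ η hθ hη
    rw [hP₁ x y θ η]
    congr 1
    ext i j
    exact double_int_eq (fun a b => (Q₁ x y a b * R₁ a b θ η) i j)
      (integrableOn_A (contOn_entry (contOn_matMul cQ1 (cR1q θ η hθ hη)) i j))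
  -- expand the outer operator
  have hL0 : sepPIop Q₀ Q₁ (sepPIop R₀ R₁ v) x y
      = (Q₀ x y).mulVec (sepPIop R₀ R₁ v x y)
        + ∫ θ in (0:ℝ)..1, ∫ η in (0:ℝ)..1,
            (Q₁ x y θ η).mulVec (sepPIop R₀ R₁ v θ η) := rfl
  have hQ0g : (Q₀ x y).mulVec (sepPIop R₀ R₁ v x y)
      = (Q₀ x y * R₀ x y).mulVec (v x y)
        + ∫ q in Set.Ioc (0:ℝ) 1 ×ˢ Set.Ioc (0:ℝ) 1,
            (Q₀ x y * R₁ x y q.1 q.2).mulVec (v q.1 q.2) := by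
    rw [hgK x y hx hy, Matrix.mulVec_add, Matrix.mulVec_mulVec, mulVec_integral _ ik1]
    simp only [Matrix.mulVec_mulVec]
  have hI1 : (∫ θ in (0:ℝ)..1, ∫ η in (0:ℝ)..1,
        (Q₁ x y θ η).mulVec (sepPIop R₀ R₁ v θ η))
      = ∫ θ in (0:ℝ)..1, ∫ η in (0:ℝ)..1,
          ((Q₁ x y θ η * R₀ θ η).mulVec (v θ η)
            + ∫ q in Set.Ioc (0:ℝ) 1 ×ˢ Set.Ioc (0:ℝ) 1,
                (Q₁ x y θ η * R₁ θ η q.1 q.2).mulVec (v q.1 q.2)) := by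
    apply intervalIntegral.integral_congr
    intro θ hθ
    rw [Set.uIcc_of_le (zero_le_one' ℝ)] at hθ
    apply intervalIntegral.integral_congr
    intro η hη
    rw [Set.uIcc_of_le (zero_le_one' ℝ)] at hη
    exact step2 θ η hθ hη
  have hI2 : (∫ θ in (0:ℝ)..1, ∫ η in (0:ℝ)..1,
        ((Q₁ x y θ η * R₀ θ η).mulVec (v θ η)
          + ∫ q in Set.Ioc (0:ℝ) 1 ×ˢ Set.Ioc (0:ℝ) 1,
              (Q₁ x y θ η * R₁ θ η q.1 q.2).mulVec (v q.1 q.2)))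
      = ∫ p in Set.Ioc (0:ℝ) 1 ×ˢ Set.Ioc (0:ℝ) 1,
          ((Q₁ x y p.1 p.2 * R₀ p.1 p.2).mulVec (v p.1 p.2)
            + ∫ q in Set.Ioc (0:ℝ) 1 ×ˢ Set.Ioc (0:ℝ) 1,
                (Q₁ x y p.1 p.2 * R₁ p.1 p.2 q.1 q.2).mulVec (v q.1 q.2)) :=
    double_int_eq _ (ik2.add iW)
  have hswap : (∫ p in Set.Ioc (0:ℝ) 1 ×ˢ Set.Ioc (0:ℝ) 1,
        ∫ q in Set.Ioc (0:ℝ) 1 ×ˢ Set.Ioc (0:ℝ) 1,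
          (Q₁ x y p.1 p.2 * R₁ p.1 p.2 q.1 q.2).mulVec (v q.1 q.2))
      = ∫ q in Set.Ioc (0:ℝ) 1 ×ˢ Set.Ioc (0:ℝ) 1,
          ∫ p in Set.Ioc (0:ℝ) 1 ×ˢ Set.Ioc (0:ℝ) 1,
            (Q₁ x y p.1 p.2 * R₁ p.1 p.2 q.1 q.2).mulVec (v q.1 q.2) := by
    exact integral_integral_swap iH
  -- the right-hand side
  have iOf : Integrable (fun q : ℝ × ℝ =>
      (Matrix.of fun i j => ∫ p in Set.Ioc (0:ℝ) 1 ×ˢ Set.Ioc (0:ℝ) 1,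
        (Q₁ x y p.1 p.2 * R₁ p.1 p.2 q.1 q.2) i j).mulVec (v q.1 q.2))
      (volume.restrict (Set.Ioc (0:ℝ) 1 ×ˢ Set.Ioc (0:ℝ) 1)) :=
    iW2.congr ((ae_restrict_mem hAmeas).mono fun q hq =>
      hinner q.1 q.2 (Asub hq).1 (Asub hq).2)
  have hR1' : (∫ θ in (0:ℝ)..1, ∫ η in (0:ℝ)..1, (P₁ x y θ η).mulVec (v θ η))
      = ∫ θ in (0:ℝ)..1, ∫ η in (0:ℝ)..1,
          ((Q₀ x y * R₁ x y θ η).mulVec (v θ η)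
            + (Q₁ x y θ η * R₀ θ η).mulVec (v θ η)
            + (Matrix.of fun i j => ∫ p in Set.Ioc (0:ℝ) 1 ×ˢ Set.Ioc (0:ℝ) 1,
                (Q₁ x y p.1 p.2 * R₁ p.1 p.2 θ η) i j).mulVec (v θ η)) := by
    apply intervalIntegral.integral_congr
    intro θ hθ
    rw [Set.uIcc_of_le (zero_le_one' ℝ)] at hθ
    apply intervalIntegral.integral_congr
    intro η hη
    rw [Set.uIcc_of_le (zero_le_one' ℝ)] at hη
    show P₁ x y θ η *ᵥ v θ η
        = (Q₀ x y * R₁ x y θ η) *ᵥ v θ η + (Q₁ x y θ η * R₀ θ η) *ᵥ v θ η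
          + (Matrix.of fun i j => ∫ p in Set.Ioc (0:ℝ) 1 ×ˢ Set.Ioc (0:ℝ) 1,
              (Q₁ x y p.1 p.2 * R₁ p.1 p.2 θ η) i j) *ᵥ v θ η
    rw [hP θ η hθ hη, Matrix.add_mulVec, Matrix.add_mulVec]
  have hR2 : (∫ θ in (0:ℝ)..1, ∫ η in (0:ℝ)..1,
        ((Q₀ x y * R₁ x y θ η).mulVec (v θ η)
          + (Q₁ x y θ η * R₀ θ η).mulVec (v θ η)
          + (Matrix.of fun i j => ∫ p in Set.Ioc (0:ℝ) 1 ×ˢ Set.Ioc (0:ℝ) 1,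
              (Q₁ x y p.1 p.2 * R₁ p.1 p.2 θ η) i j).mulVec (v θ η)))
      = ∫ q in Set.Ioc (0:ℝ) 1 ×ˢ Set.Ioc (0:ℝ) 1,
          ((Q₀ x y * R₁ x y q.1 q.2).mulVec (v q.1 q.2)
            + (Q₁ x y q.1 q.2 * R₀ q.1 q.2).mulVec (v q.1 q.2)
            + (Matrix.of fun i j => ∫ p in Set.Ioc (0:ℝ) 1 ×ˢ Set.Ioc (0:ℝ) 1,
                (Q₁ x y p.1 p.2 * R₁ p.1 p.2 q.1 q.2) i j).mulVec (v q.1 q.2)) :=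
    double_int_eq _ ((ik0.add ik2).add iOf)
  have hOfint : (∫ q in Set.Ioc (0:ℝ) 1 ×ˢ Set.Ioc (0:ℝ) 1,
        (Matrix.of fun i j => ∫ p in Set.Ioc (0:ℝ) 1 ×ˢ Set.Ioc (0:ℝ) 1,
          (Q₁ x y p.1 p.2 * R₁ p.1 p.2 q.1 q.2) i j).mulVec (v q.1 q.2))
      = ∫ q in Set.Ioc (0:ℝ) 1 ×ˢ Set.Ioc (0:ℝ) 1,
          ∫ p in Set.Ioc (0:ℝ) 1 ×ˢ Set.Ioc (0:ℝ) 1,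
            (Q₁ x y p.1 p.2 * R₁ p.1 p.2 q.1 q.2).mulVec (v q.1 q.2) :=
    setIntegral_congr_fun hAmeas fun q hq =>
      (hinner q.1 q.2 (Asub hq).1 (Asub hq).2).symm
  have ik02 : Integrable (fun q : ℝ × ℝ =>
      (Q₀ x y * R₁ x y q.1 q.2).mulVec (v q.1 q.2)
        + (Q₁ x y q.1 q.2 * R₀ q.1 q.2).mulVec (v q.1 q.2))
      (volume.restrict (Set.Ioc (0:ℝ) 1 ×ˢ Set.Ioc (0:ℝ) 1)) := ik0.add ik2
  rw [hL0, hQ0g, hI1, hI2, integral_add ik2 iW, hswap, hR1', hR2,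
    integral_add ik02 iOf, integral_add ik0 ik2, hOfint]
  abel
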